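/- Let L be an orthomodular ortholattice satisfying Godowski's equation 4-Go (for all a₁, a₂, a₃, a₄ ∈ L, (a₁ →₁ a₂) ⊓ (a₂ →₁ a₃) ⊓ (a₃ →₁ a₄) ⊓ (a₄ →₁ a₁) = (a₄ →₁ a₃) ⊓ (a₃ →₁ a₂) ⊓ (a₂ →₁ a₁) ⊓ (a₁ →₁ a₄)). Then for all a, b, c, d, e, f, g, h ∈ L with a ≤ bᶜ, b ≤ cᶜ, c ≤ dᶜ, d ≤ eᶜ, e ≤ fᶜ, f ≤ gᶜ, g ≤ hᶜ, h ≤ aᶜ, Mayet's equation holds: (a ⊔ b) ⊓ (c ⊔ d) ⊓ (e ⊔ f) ⊓ (g ⊔ h) ⊓ ((a ⊔ h) →₁ (d ⊔ e)ᶜ) = ⊥. -/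

import Mathlib

/-! The four cycle joins `a ⊔ b`, `c ⊔ d`, `e ⊔ f`, `g ⊔ h` lie under the Sasaki implications
`hᶜ →₁ fᶜ`, `fᶜ →₁ dᶜ`, `dᶜ →₁ bᶜ`, `bᶜ →₁ hᶜ`, so their meet `Y` lies under one side of 4-Go
at `(bᶜ, dᶜ, fᶜ, hᶜ)`, hence under the other, in particular under `hᶜ →₁ bᶜ` and `dᶜ →₁ fᶜ`.
Orthomodularity gives `(a ⊔ b) ⊓ (hᶜ →₁ bᶜ) ≤ a ⊔ h`, so `Y ≤ a ⊔ h`, and likewise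
`Y ≤ d ⊔ e`; but `(a ⊔ h) →₁ (d ⊔ e)ᶜ` is orthogonal to `(a ⊔ h) ⊓ (d ⊔ e)`. -/

/-- An ortholattice: a bounded lattice with an orthocomplementation. -/
class Ortholattice (α : Type*) extends Lattice α, BoundedOrder α, Compl α where
  compl_compl : ∀ x : α, xᶜᶜ = x
  compl_antitone : ∀ x y : α, x ≤ y → yᶜ ≤ xᶜ
  inf_compl : ∀ x : α, x ⊓ xᶜ = ⊥
  sup_compl : ∀ x : α, x ⊔ xᶜ = ⊤

/-- The Sasaki implication `a →₁ b = aᶜ ⊔ (a ⊓ b)`. -/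
def olImp1 {α : Type*} [Ortholattice α] (a b : α) : α := aᶜ ⊔ (a ⊓ b)

/-- The Dishkant implication `a →₂ b = b ⊔ (aᶜ ⊓ bᶜ)`. -/
def olImp2 {α : Type*} [Ortholattice α] (a b : α) : α := b ⊔ (aᶜ ⊓ bᶜ)

def Orthomodular (α : Type*) [Ortholattice α] : Prop :=
  ∀ a b : α, a ≤ b → a ⊔ (aᶜ ⊓ b) = b

namespace Ortholattice

variable {α : Type*} [Ortholattice α]

theorem compl_le_compl {x y : α} (h : x ≤ y) : yᶜ ≤ xᶜ :=
  compl_antitone x y h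

theorem le_compl_comm {x y : α} (h : x ≤ yᶜ) : y ≤ xᶜ := by
  simpa only [compl_compl] using compl_le_compl h

theorem compl_sup_eq (x y : α) : (x ⊔ y)ᶜ = xᶜ ⊓ yᶜ := by
  refine le_antisymm (le_inf (compl_le_compl le_sup_left) (compl_le_compl le_sup_right)) ?_
  exact le_compl_comm (sup_le (le_compl_comm inf_le_left) (le_compl_comm inf_le_right))

theorem compl_inf_eq (x y : α) : (x ⊓ y)ᶜ = xᶜ ⊔ yᶜ := by
  rw [← compl_compl (xᶜ ⊔ yᶜ), compl_sup_eq, compl_compl, compl_compl]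

theorem olImp1_compl_compl (y z : α) : olImp1 yᶜ zᶜ = y ⊔ (yᶜ ⊓ zᶜ) := by
  rw [olImp1, compl_compl]

theorem sup_le_olImp1_compl {x y z : α} (hxy : x ≤ yᶜ) (hxz : x ≤ zᶜ) :
    x ⊔ y ≤ olImp1 yᶜ zᶜ := by
  rw [olImp1_compl_compl, sup_comm]
  exact sup_le_sup_left (le_inf hxy hxz) y

theorem inf_olImp1_compl_eq_bot {x u v : α} (hx : x ≤ u ⊓ v) : x ⊓ olImp1 u vᶜ = ⊥ := by
  have himp : olImp1 u vᶜ ≤ (u ⊓ v)ᶜ := by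
    rw [compl_inf_eq]
    exact sup_le_sup_left inf_le_right uᶜ
  exact le_bot_iff.mp <| (inf_le_inf hx himp).trans (inf_compl (u ⊓ v)).le

end Ortholattice

namespace Orthomodular

open Ortholattice

variable {α : Type*} [Ortholattice α]

theorem compl_inf_sup_eq {h k : α} (hOM : Orthomodular α) (hk : k ≤ hᶜ) :
    hᶜ ⊓ (h ⊔ k) = k := by
  have hle : k ≤ hᶜ ⊓ (h ⊔ k) := le_inf hk le_sup_right
  have hbot : kᶜ ⊓ (hᶜ ⊓ (h ⊔ k)) = ⊥ := by
    rw [← inf_assoc, ← compl_sup_eq, sup_comm k h, inf_comm]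
    exact inf_compl _
  simpa only [hbot, sup_bot_eq] using (hOM k _ hle).symm

/-- With `u = a ⊔ h` and `w = hᶜ →₁ bᶜ`, the relative complement `m = uᶜ ⊓ w` of `u` in `w`
lies in `hᶜ ⊓ w = hᶜ ⊓ bᶜ`, so `m` is orthogonal to `a ⊔ b`; then `(a ⊔ b) ⊓ w ≤ mᶜ ⊓ (m ⊔ u) = u`. -/
theorem sup_inf_olImp1_le {a b h : α} (hOM : Orthomodular α) (hab : a ≤ bᶜ) (hha : h ≤ aᶜ) :
    (a ⊔ b) ⊓ olImp1 hᶜ bᶜ ≤ a ⊔ h := by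
  rw [olImp1_compl_compl]
  set w := h ⊔ (hᶜ ⊓ bᶜ)
  set u := a ⊔ h
  set m := uᶜ ⊓ w
  have huw : u ≤ w := sup_le ((le_inf (le_compl_comm hha) hab).trans le_sup_right) le_sup_left
  have hw : m ⊔ u = w := by rw [sup_comm]; exact hOM u w huw
  have hmh : m ≤ hᶜ := inf_le_left.trans (compl_le_compl le_sup_right)
  have hmb : m ≤ bᶜ := by
    have hm : m ≤ hᶜ ⊓ w := le_inf hmh inf_le_right
    rw [compl_inf_sup_eq hOM inf_le_left] at hm
    exact hm.trans inf_le_right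
  have hma : m ≤ aᶜ := inf_le_left.trans (compl_le_compl le_sup_left)
  have habm : a ⊔ b ≤ mᶜ := le_compl_comm (by rw [compl_sup_eq]; exact le_inf hma hmb)
  calc (a ⊔ b) ⊓ w ≤ mᶜ ⊓ (m ⊔ u) := by rw [hw]; exact inf_le_inf_right w habm
    _ = u := compl_inf_sup_eq hOM (le_compl_comm inf_le_left)

end Orthomodular

open Ortholattice Orthomodular

/-- In an orthomodular ortholattice satisfying Godowski'\''s equation 4-Go, Mayet'\''s
Example 4 equation holds. -/
theorem stmt_13 (α : Type*) [Ortholattice α]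
    (hOM : ∀ a b : α, a ≤ b → a ⊔ (aᶜ ⊓ b) = b)
    (h4go : ∀ a1 a2 a3 a4 : α,
      olImp1 a1 a2 ⊓ olImp1 a2 a3 ⊓ olImp1 a3 a4 ⊓ olImp1 a4 a1 =
        olImp1 a4 a3 ⊓ olImp1 a3 a2 ⊓ olImp1 a2 a1 ⊓ olImp1 a1 a4) :
    ∀ a b c d e f g h : α,
      a ≤ bᶜ → b ≤ cᶜ → c ≤ dᶜ → d ≤ eᶜ → e ≤ fᶜ → f ≤ gᶜ → g ≤ hᶜ → h ≤ aᶜ →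
        (a ⊔ b) ⊓ (c ⊔ d) ⊓ (e ⊔ f) ⊓ (g ⊔ h) ⊓ olImp1 (a ⊔ h) (d ⊔ e)ᶜ = ⊥ := by
  intro a b c d e f g h hab hbc hcd hde hef hfg hgh hha
  set Y := (a ⊔ b) ⊓ (c ⊔ d) ⊓ (e ⊔ f) ⊓ (g ⊔ h)
  have hcycle : Y ≤ olImp1 hᶜ bᶜ ⊓ olImp1 dᶜ fᶜ :=
    calc Y ≤ olImp1 bᶜ hᶜ ⊓ olImp1 dᶜ bᶜ ⊓ olImp1 fᶜ dᶜ ⊓ olImp1 hᶜ fᶜ := by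
          refine inf_le_inf (inf_le_inf (inf_le_inf ?_ ?_) ?_) ?_
          · exact sup_le_olImp1_compl hab (le_compl_comm hha)
          · exact sup_le_olImp1_compl hcd (le_compl_comm hbc)
          · exact sup_le_olImp1_compl hef (le_compl_comm hde)
          · exact sup_le_olImp1_compl hgh (le_compl_comm hfg)
      _ = olImp1 hᶜ fᶜ ⊓ olImp1 fᶜ dᶜ ⊓ olImp1 dᶜ bᶜ ⊓ olImp1 bᶜ hᶜ := by ac_rfl
      _ = olImp1 bᶜ dᶜ ⊓ olImp1 dᶜ fᶜ ⊓ olImp1 fᶜ hᶜ ⊓ olImp1 hᶜ bᶜ := (h4go _ _ _ _).symm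
      _ ≤ olImp1 hᶜ bᶜ ⊓ olImp1 dᶜ fᶜ :=
        le_inf inf_le_right (inf_le_left.trans (inf_le_left.trans inf_le_right))
  have hYab : Y ≤ a ⊔ b := inf_le_left.trans (inf_le_left.trans inf_le_left)
  have hYef : Y ≤ e ⊔ f := inf_le_left.trans inf_le_right
  have hYah : Y ≤ a ⊔ h :=
    (le_inf hYab (hcycle.trans inf_le_left)).trans (sup_inf_olImp1_le hOM hab hha)
  have hYde : Y ≤ d ⊔ e := sup_comm e d ▸
    (le_inf hYef (hcycle.trans inf_le_right)).trans (sup_inf_olImp1_le hOM hef hde)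
  exact inf_olImp1_compl_eq_bot (le_inf hYah hYde)
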